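/- Suppose ‖∇ℓ(w, z_i)‖ ≤ C for all i and w, and let L(w; S) = (1/|S|) Σ_{z∈S} ℓ(w,z) + (λ/2)‖w‖². Let D be a dataset of size n, M ⊆ D of size m with m < n, and w a point with ‖w‖ ≤ C/λ. Then ‖∇L(w; D\M) - ∇L(w; D)‖ ≤ 2Cm/(n−m), where the gradient is with respect to w. -/

import Mathlib

/-!
The regularization term `λ • w` cancels, leaving the difference of two averages of per-sample
gradients. The average over `D` is the convex combination of the averages over `D \ M` and
over `M` with weights `(n - m)/n` and `m/n`, so that difference is `m/n` times the difference
of the averages over `D \ M` and over `M`, each of norm at most `C`. This gives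
`2Cm/n ≤ 2Cm/(n - m)`.
-/

open Finset

section Average

variable {ι E : Type*}

lemma card_smul_inv_card_smul_sum [AddCommGroup E] [Module ℝ E] (s : Finset ι) (f : ι → E) :
    (#s : ℝ) • ((#s : ℝ)⁻¹ • ∑ i ∈ s, f i) = ∑ i ∈ s, f i := by
  rcases s.eq_empty_or_nonempty with rfl | hs
  · simp
  · exact smul_inv_smul₀ (by positivity) _

lemma inv_card_smul_sum_sdiff_sub_inv_card_smul_sum [AddCommGroup E] [Module ℝ E]
    [DecidableEq ι] {s t : Finset ι} (hts : t ⊆ s) (f : ι → E) :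
    (#(s \ t) : ℝ)⁻¹ • ∑ i ∈ s \ t, f i - (#s : ℝ)⁻¹ • ∑ i ∈ s, f i
      = ((#t : ℝ) / #s) •
          ((#(s \ t) : ℝ)⁻¹ • ∑ i ∈ s \ t, f i - (#t : ℝ)⁻¹ • ∑ i ∈ t, f i) := by
  rcases s.eq_empty_or_nonempty with rfl | hs
  · simp
  set a := (#(s \ t) : ℝ)⁻¹ • ∑ i ∈ s \ t, f i
  set b := (#t : ℝ)⁻¹ • ∑ i ∈ t, f i
  have hsum : ∑ i ∈ s, f i = (#(s \ t) : ℝ) • a + (#t : ℝ) • b := by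
    simp only [a, b, card_smul_inv_card_smul_sum, sum_sdiff hts]
  have hcard : (#(s \ t) : ℝ) = #s - #t := by
    rw [card_sdiff_of_subset hts, Nat.cast_sub (card_le_card hts)]
  have hs0 : (#s : ℝ) ≠ 0 := by positivity
  clear_value a b
  rw [hsum, hcard]
  match_scalars
  · field_simp
    ring
  · field_simp

variable [SeminormedAddCommGroup E] [NormedSpace ℝ E]

lemma norm_inv_card_smul_sum_le {s : Finset ι} {f : ι → E} {C : ℝ} (hC : 0 ≤ C)
    (hf : ∀ i ∈ s, ‖f i‖ ≤ C) : ‖(#s : ℝ)⁻¹ • ∑ i ∈ s, f i‖ ≤ C := by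
  rcases s.eq_empty_or_nonempty with rfl | hs
  · simpa using hC
  calc ‖(#s : ℝ)⁻¹ • ∑ i ∈ s, f i‖ = (#s : ℝ)⁻¹ * ‖∑ i ∈ s, f i‖ := by
        rw [norm_smul, norm_inv, RCLike.norm_natCast]
    _ ≤ (#s : ℝ)⁻¹ * (#s * C) := by
        gcongr
        simpa using norm_sum_le_of_le s hf
    _ = C := by field_simp

end Average

theorem stmt4_general {d : ℕ} {Z : Type*} [DecidableEq Z]
    (C lam : ℝ) (hC : 0 < C)
    (g : EuclideanSpace ℝ (Fin d) → Z → EuclideanSpace ℝ (Fin d))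
    (hgbound : ∀ w z, ‖g w z‖ ≤ C)
    (G : Finset Z → EuclideanSpace ℝ (Fin d) → EuclideanSpace ℝ (Fin d))
    (hG : ∀ S w, G S w = (S.card : ℝ)⁻¹ • ∑ z ∈ S, g w z + lam • w)
    (D M : Finset Z) (hM : M ⊆ D) (hmn : M.card < D.card)
    (w : EuclideanSpace ℝ (Fin d)) :
    ‖G (D \ M) w - G D w‖ ≤ 2 * C * M.card / ((D.card : ℝ) - M.card) := by
  have hgap : (0 : ℝ) < #D - #M := sub_pos.mpr (by exact_mod_cast hmn)
  have havg (S : Finset Z) : ‖(#S : ℝ)⁻¹ • ∑ z ∈ S, g w z‖ ≤ C :=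
    norm_inv_card_smul_sum_le hC.le fun z _ ↦ hgbound w z
  rw [hG, hG, add_sub_add_right_eq_sub, inv_card_smul_sum_sdiff_sub_inv_card_smul_sum hM,
    norm_smul, Real.norm_of_nonneg (by positivity)]
  calc (#M : ℝ) / #D * ‖_ - _‖ ≤ #M / #D * (C + C) := by
        gcongr; exact norm_sub_le_of_le (havg _) (havg _)
    _ = 2 * C * #M / #D := by ring
    _ ≤ 2 * C * #M / (#D - #M) := by
        gcongr; linarith [(#M).cast_nonneg (α := ℝ)]

theorem stmt4 {d : ℕ} {Z : Type*} [DecidableEq Z]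
    (C lam : ℝ) (hC : 0 < C) (hlam : 0 < lam)
    (g : EuclideanSpace ℝ (Fin d) → Z → EuclideanSpace ℝ (Fin d))
    (hgbound : ∀ w z, ‖g w z‖ ≤ C)
    (G : Finset Z → EuclideanSpace ℝ (Fin d) → EuclideanSpace ℝ (Fin d))
    (hG : ∀ S w, G S w = (S.card : ℝ)⁻¹ • ∑ z ∈ S, g w z + lam • w)
    (D M : Finset Z) (hM : M ⊆ D) (hmn : M.card < D.card)
    (w : EuclideanSpace ℝ (Fin d)) (hw : ‖w‖ ≤ C / lam) :
    ‖G (D \ M) w - G D w‖ ≤ 2 * C * M.card / ((D.card : ℝ) - M.card) :=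
  stmt4_general C lam hC g hgbound G hG D M hM hmn w
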